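/- Let (Ω, 𝓕, μ) be a probability space and T, k ∈ ℕ. For each t = 1, …, T let X_{t1}, …, X_{tk} and W_t be random variables with values in standard Borel spaces, let L_t : Ω → 𝓛 be a random variable with 𝓛 standard Borel, and let 𝓖_t := σ(X_{s j} : s ≤ t−1, 1 ≤ j ≤ k) ⊔ σ(L_1, …, L_t). Suppose for every t and every j = 1, …, k there exist: a measurable function f_{t j} : 𝓛 × [0,1] → 𝓧_{t j} with X_{t j} = f_{t j}(L_t, M_{t j}) almost surely, where M_{t j} := h_{t j}(σ_j, ω_{t j}) for a measurable h_{t j} : 𝓢_j × [0,1] → [0,1], random variables σ_j : Ω → 𝓢_j (into standard Borel spaces) that are almost surely constant, and random variables ω_{t j} : Ω → [0,1] such that the joint random variable (ω_{t1}, …, ω_{tk}) is conditionally independent of W̄_t := (W_1, …, W_t) given 𝓖_t. Then for every t = 1, …, T, the joint random variable (X_{t1}, …, X_{tk}) is conditionally independent of W̄_t given 𝓖_t. -/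

import Mathlib

/-!
Since each `σ_j` is almost surely a constant `v_j`, almost surely
`X_t = Φ(L_t, ω_t)` with `Φ(l, u) = (f_{tj}(l, h_{tj}(v_j, u_j)))_j` measurable. Conditional
independence given `𝓖` survives measurable maps and a.e. modifications of the first variable,
so it remains to adjoin the `𝓖_t`-measurable `L_t` to `ω_t`. For this, `A ⊥ B | 𝓖` is recast
as an identity of finite measures: for every event `{B ∈ F}` and every `𝓖`-measurable `s`,
the law of `A` on `s ∩ {B ∈ F}` is the law of `A` on `s` weighted by `P(B ∈ F | 𝓖)` (the
pull-out property of conditional expectation). For `(ξ, A)` with `ξ` `𝓖`-measurable, both sides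
agree on a rectangle `D₁ × D₂` because this is the identity for `A` on the `𝓖`-measurable set
`s ∩ {ξ ∈ D₁}`, and finite measures on a product that agree on rectangles are equal.
-/

open MeasureTheory

/-- `A` and `B` are conditionally independent given the sub-σ-algebra `G`:
for all measurable sets `E`, `F` in the respective codomains,
`P(A ∈ E ∧ B ∈ F | G) = P(A ∈ E | G) · P(B ∈ F | G)` almost surely. -/
def CondIndepRV {Ω α β : Type*} {mΩ : MeasurableSpace Ω} [MeasurableSpace α] [MeasurableSpace β]
    (μ : Measure Ω) (G : MeasurableSpace Ω) (A : Ω → α) (B : Ω → β) : Prop :=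
  ∀ (E : Set α) (F : Set β), MeasurableSet E → MeasurableSet F →
    (μ[(A ⁻¹' E ∩ B ⁻¹' F).indicator (fun _ => (1 : ℝ)) | G]) =ᵐ[μ]
      fun ω => (μ[(A ⁻¹' E).indicator (fun _ => (1 : ℝ)) | G]) ω *
        (μ[(B ⁻¹' F).indicator (fun _ => (1 : ℝ)) | G]) ω


open Filter

section ConditionalExpectation

variable {Ω : Type*} {G mΩ : MeasurableSpace Ω} {μ : Measure[mΩ] Ω} {U V : Set Ω}

theorem condExp_indicator_one_nonneg (S : Set Ω) :
    0 ≤ᵐ[μ] μ[S.indicator (fun _ => (1 : ℝ)) | G] :=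
  condExp_nonneg (.of_forall fun ω => Set.indicator_nonneg (fun _ _ => zero_le_one) ω)

theorem condExp_indicator_one_mul_ae_eq [IsFiniteMeasure μ] (hU : MeasurableSet U) {g : Ω → ℝ}
    (hg : StronglyMeasurable[G] g) (hgi : Integrable g μ) :
    μ[U.indicator (fun _ => (1 : ℝ)) | G] * g =ᵐ[μ] μ[U.indicator g | G] := by
  have hind : U.indicator g = U.indicator (fun _ => (1 : ℝ)) * g := by
    ext ω; by_cases hω : ω ∈ U <;> simp [hω]
  rw [hind]
  exact (condExp_mul_of_stronglyMeasurable_right hg (hind ▸ hgi.indicator hU)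
    ((integrable_const 1).indicator hU)).symm

theorem setIntegral_condExp_indicator_one_mul [IsFiniteMeasure μ] (hG : G ≤ mΩ)
    (hU : MeasurableSet U) {f : Ω → ℝ} {s : Set Ω} (hs : MeasurableSet[G] s) :
    ∫ ω in s, (μ[U.indicator (fun _ => (1 : ℝ)) | G] * μ[f | G]) ω ∂μ
      = ∫ ω in U ∩ s, μ[f | G] ω ∂μ := by
  calc ∫ ω in s, (μ[U.indicator (fun _ => (1 : ℝ)) | G] * μ[f | G]) ω ∂μ
      = ∫ ω in s, μ[U.indicator μ[f | G] | G] ω ∂μ := integral_congr_ae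
        (ae_restrict_of_ae (condExp_indicator_one_mul_ae_eq hU stronglyMeasurable_condExp
          integrable_condExp))
    _ = ∫ ω in s, U.indicator μ[f | G] ω ∂μ :=
        setIntegral_condExp hG (integrable_condExp.indicator hU) hs
    _ = ∫ ω in U ∩ s, μ[f | G] ω ∂μ := by rw [setIntegral_indicator hU, Set.inter_comm]

theorem condExp_indicator_inter_ae_eq_mul_iff [IsFiniteMeasure μ] (hG : G ≤ mΩ)
    (hU : MeasurableSet U) (hV : MeasurableSet V) :
    (μ[(U ∩ V).indicator (fun _ => (1 : ℝ)) | G] =ᵐ[μ]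
        fun ω => μ[U.indicator (fun _ => (1 : ℝ)) | G] ω *
          μ[V.indicator (fun _ => (1 : ℝ)) | G] ω)
      ↔ ∀ s, MeasurableSet[G] s → μ (U ∩ s ∩ V)
        = ∫⁻ ω in U ∩ s, ENNReal.ofReal (μ[V.indicator (fun _ => (1 : ℝ)) | G] ω) ∂μ := by
  set gV := μ[V.indicator (fun _ => (1 : ℝ)) | G]
  have hUV : Integrable ((U ∩ V).indicator (fun _ => (1 : ℝ))) μ :=
    (integrable_const 1).indicator (hU.inter hV)
  have hmeasure : ∀ s, MeasurableSet[G] s →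
      ∫ ω in s, μ[(U ∩ V).indicator (fun _ => (1 : ℝ)) | G] ω ∂μ = μ.real (U ∩ s ∩ V) := by
    intro s hs
    rw [setIntegral_condExp hG hUV hs, setIntegral_indicator (hU.inter hV), setIntegral_const,
      smul_eq_mul, mul_one, Set.inter_left_comm, ← Set.inter_assoc]
  have hlintegral : ∀ s, ∫⁻ ω in U ∩ s, ENNReal.ofReal (gV ω) ∂μ
      = ENNReal.ofReal (∫ ω in U ∩ s, gV ω ∂μ) := fun s =>
    (ofReal_integral_eq_lintegral_ofReal integrable_condExp.integrableOn
      (ae_restrict_of_ae (condExp_indicator_one_nonneg V))).symm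
  constructor
  · intro h s hs
    rw [hlintegral, ← setIntegral_condExp_indicator_one_mul hG hU hs, ← ofReal_measureReal,
      ← hmeasure s hs]
    exact congrArg ENNReal.ofReal (integral_congr_ae (ae_restrict_of_ae h))
  · intro h
    refine (ae_eq_condExp_of_forall_setIntegral_eq hG hUV (fun s _ _ => ?_) (fun s hs _ => ?_)
      (stronglyMeasurable_condExp.mul stronglyMeasurable_condExp).aestronglyMeasurable).symm
    · exact (integrable_condExp.congr (condExp_indicator_one_mul_ae_eq hU
        stronglyMeasurable_condExp integrable_condExp).symm).integrableOn
    · rw [← setIntegral_condExp hG hUV hs, hmeasure s hs, measureReal_def, h s hs, hlintegral,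
        ENNReal.toReal_ofReal
        (integral_nonneg_of_ae (ae_restrict_of_ae (condExp_indicator_one_nonneg V)))]
      exact setIntegral_condExp_indicator_one_mul hG hU hs

end ConditionalExpectation

section CondIndepRV

variable {Ω α β : Type*} [MeasurableSpace α] [MeasurableSpace β]
  {G mΩ : MeasurableSpace Ω} {μ : Measure[mΩ] Ω} {A : Ω → α} {B : Ω → β}

theorem condIndepRV_iff_map_restrict [IsFiniteMeasure μ] (hG : G ≤ mΩ) (hA : Measurable A)
    (hB : Measurable B) :
    CondIndepRV μ G A B ↔ ∀ F, MeasurableSet F → ∀ s, MeasurableSet[G] s →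
      ((μ.restrict (B ⁻¹' F)).restrict s).map A
        = ((μ.withDensity fun ω => ENNReal.ofReal
            (μ[(B ⁻¹' F).indicator (fun _ => (1 : ℝ)) | G] ω)).restrict s).map A := by
  have hmap_apply : ∀ F s, MeasurableSet[G] s → ∀ E, MeasurableSet E →
      (((μ.restrict (B ⁻¹' F)).restrict s).map A E
        = ((μ.withDensity fun ω => ENNReal.ofReal
            (μ[(B ⁻¹' F).indicator (fun _ => (1 : ℝ)) | G] ω)).restrict s).map A E
      ↔ μ (A ⁻¹' E ∩ s ∩ B ⁻¹' F) = ∫⁻ ω in A ⁻¹' E ∩ s,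
          ENNReal.ofReal (μ[(B ⁻¹' F).indicator (fun _ => (1 : ℝ)) | G] ω) ∂μ) := by
    intro F s hs E hE
    rw [Measure.map_apply hA hE, Measure.map_apply hA hE, Measure.restrict_apply (hA hE),
      Measure.restrict_apply (hA hE), Measure.restrict_apply ((hA hE).inter (hG s hs)),
      withDensity_apply _ ((hA hE).inter (hG s hs))]
  constructor
  · intro h F hF s hs
    ext E hE
    exact (hmap_apply F s hs E hE).2
      ((condExp_indicator_inter_ae_eq_mul_iff hG (hA hE) (hB hF)).1 (h E F hE hF) s hs)
  · intro h E F hE hF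
    exact (condExp_indicator_inter_ae_eq_mul_iff hG (hA hE) (hB hF)).2 fun s hs =>
      (hmap_apply F s hs E hE).1 (by rw [h F hF s hs])

theorem map_prodMk_apply_prod {γ : Type*} [MeasurableSpace γ] (ν : Measure[mΩ] Ω) {ξ : Ω → γ}
    (hξ : Measurable ξ) (hA : Measurable A) {D₁ : Set γ} {D₂ : Set α} (hD₁ : MeasurableSet D₁)
    (hD₂ : MeasurableSet D₂) :
    ν.map (fun ω => (ξ ω, A ω)) (D₁ ×ˢ D₂) = (ν.restrict (ξ ⁻¹' D₁)).map A D₂ := by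
  rw [Measure.map_apply (hξ.prodMk hA) (hD₁.prod hD₂), Measure.map_apply hA hD₂,
    Measure.restrict_apply (hA hD₂), Set.mk_preimage_prod, Set.inter_comm]

theorem CondIndepRV.prodMk_left {γ : Type*} [MeasurableSpace γ] [IsFiniteMeasure μ]
    (hG : G ≤ mΩ) (hA : Measurable A) (hB : Measurable B) {ξ : Ω → γ} (hξ : Measurable[G] ξ)
    (h : CondIndepRV μ G A B) : CondIndepRV μ G (fun ω => (ξ ω, A ω)) B := by
  have hξ' : Measurable ξ := hξ.mono hG le_rfl
  rw [condIndepRV_iff_map_restrict hG hA hB] at h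
  rw [condIndepRV_iff_map_restrict hG (hξ'.prodMk hA) hB]
  intro F hF s hs
  refine Measure.ext_prod fun {D₁ D₂} hD₁ hD₂ => ?_
  rw [map_prodMk_apply_prod _ hξ' hA hD₁ hD₂, map_prodMk_apply_prod _ hξ' hA hD₁ hD₂,
    Measure.restrict_restrict (hξ' hD₁), Measure.restrict_restrict (hξ' hD₁),
    h F hF _ ((hξ hD₁).inter hs)]

theorem CondIndepRV.comp_left {α' : Type*} [MeasurableSpace α'] (h : CondIndepRV μ G A B)
    {Φ : α → α'} (hΦ : Measurable Φ) : CondIndepRV μ G (fun ω => Φ (A ω)) B :=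
  fun E F hE hF => h (Φ ⁻¹' E) F (hΦ hE) hF

theorem CondIndepRV.congr_left {A' : Ω → α} (h : CondIndepRV μ G A B) (hAA' : A =ᵐ[μ] A') :
    CondIndepRV μ G A' B := by
  intro E F hE hF
  have hE' : (A' ⁻¹' E : Set Ω) =ᵐ[μ] A ⁻¹' E := hAA'.symm.fun_comp (· ∈ E)
  calc μ[(A' ⁻¹' E ∩ B ⁻¹' F).indicator (fun _ => (1 : ℝ)) | G]
      =ᵐ[μ] μ[(A ⁻¹' E ∩ B ⁻¹' F).indicator (fun _ => (1 : ℝ)) | G] :=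
        condExp_congr_ae (indicator_ae_eq_of_ae_eq_set (hE'.inter EventuallyEq.rfl))
    _ =ᵐ[μ] _ := h E F hE hF
    _ =ᵐ[μ] _ := (condExp_congr_ae (indicator_ae_eq_of_ae_eq_set hE')).symm.mul EventuallyEq.rfl

end CondIndepRV

theorem stmt6_general {Ω 𝓛 : Type*} [mΩ : MeasurableSpace Ω]
    [MeasurableSpace 𝓛]
    (μ : Measure Ω) [IsProbabilityMeasure μ]
    (T k : ℕ)
    (𝓧 : Fin T → Fin k → Type*)
    [∀ t j, MeasurableSpace (𝓧 t j)]
    (𝓦 : Fin T → Type*) [∀ t, MeasurableSpace (𝓦 t)]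
    (𝓢 : Fin k → Type*) [∀ j, MeasurableSpace (𝓢 j)]
    (X : ∀ t j, Ω → 𝓧 t j) (hX : ∀ t j, Measurable (X t j))
    (W : ∀ t, Ω → 𝓦 t) (hW : ∀ t, Measurable (W t))
    (L : Fin T → Ω → 𝓛) (hL : ∀ t, Measurable (L t))
    (G : Fin T → MeasurableSpace Ω)
    (hG : ∀ t, G t =
      (⨆ s : Fin T, ⨆ _ : s < t, ⨆ j : Fin k,
          MeasurableSpace.comap (X s j) inferInstance) ⊔
      (⨆ s : Fin T, ⨆ _ : s ≤ t, MeasurableSpace.comap (L s) inferInstance))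
    (σ : ∀ j, Ω → 𝓢 j)
    (hσconst : ∀ j, ∃ v : 𝓢 j, ∀ᵐ ω ∂μ, σ j ω = v)
    (hKall : ∀ t : Fin T,
      ∃ (f : ∀ j : Fin k, 𝓛 × Set.Icc (0 : ℝ) 1 → 𝓧 t j)
        (h : ∀ j : Fin k, 𝓢 j × Set.Icc (0 : ℝ) 1 → Set.Icc (0 : ℝ) 1)
        (e : Fin k → Ω → Set.Icc (0 : ℝ) 1),
        (∀ j, Measurable (f j)) ∧ (∀ j, Measurable (h j)) ∧ (∀ j, Measurable (e j)) ∧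
        (∀ j, ∀ᵐ ω ∂μ, X t j ω = f j (L t ω, h j (σ j ω, e j ω))) ∧
        CondIndepRV μ (G t) (fun ω => fun j => e j ω)
          (fun ω => fun s : {s : Fin T // s ≤ t} => W s.1 ω)) :
    ∀ t : Fin T,
      CondIndepRV μ (G t) (fun ω => fun j => X t j ω)
        (fun ω => fun s : {s : Fin T // s ≤ t} => W s.1 ω) := by
  intro t
  obtain ⟨f, h, e, hf, hh, he, hX_eq, hCI⟩ := hKall t
  choose v hv using hσconst
  have hG_le : G t ≤ mΩ := by
    rw [hG t]
    exact sup_le (iSup₂_le fun s _ => iSup_le fun j => (hX s j).comap_le)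
      (iSup₂_le fun s _ => (hL s).comap_le)
  have hL_meas : Measurable[G t] (L t) := by
    rw [measurable_iff_comap_le, hG t]
    exact le_sup_of_le_right (le_iSup₂_of_le t le_rfl le_rfl)
  have hΦ : Measurable fun (p : 𝓛 × (Fin k → Set.Icc (0 : ℝ) 1)) j =>
      f j (p.1, h j (v j, p.2 j)) := by
    fun_prop
  refine ((hCI.prodMk_left hG_le (by fun_prop) (by fun_prop) hL_meas).comp_left hΦ).congr_left ?_
  filter_upwards [ae_all_iff.mpr hX_eq, ae_all_iff.mpr hv] with ω hXω hσω
  ext j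
  simp [hXω, hσω]

/-- Theorem 1 of the paper (rigorous content, combining Lemmas 1 and 2): if the covariate
process admits the factor-model (sequential Kallenberg) representation
`X_{tj} = f_{tj}(L_t, M_{tj})` a.s. with noise `M_{tj} := h_{tj}(σ_j, ω_{tj})`, where the
parameters `σ_j` are almost surely constant and the uniform noises `(ω_{t1}, …, ω_{tk})`
are conditionally independent of the treatment history `W̄_t = (W_1, …, W_t)` given
`𝓖_t = σ(X_{sj} : s ≤ t−1, j) ⊔ σ(L_1, …, L_t)`, then at every time-step `t` the joint
random variable `(X_{t1}, …, X_{tk})` is conditionally independent of `W̄_t` given `𝓖_t`. -/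
theorem stmt6 {Ω 𝓛 : Type*} [mΩ : MeasurableSpace Ω]
    [MeasurableSpace 𝓛] [StandardBorelSpace 𝓛]
    (μ : Measure Ω) [IsProbabilityMeasure μ]
    (T k : ℕ)
    (𝓧 : Fin T → Fin k → Type*)
    [∀ t j, MeasurableSpace (𝓧 t j)] [∀ t j, StandardBorelSpace (𝓧 t j)]
    (𝓦 : Fin T → Type*) [∀ t, MeasurableSpace (𝓦 t)] [∀ t, StandardBorelSpace (𝓦 t)]
    (𝓢 : Fin k → Type*) [∀ j, MeasurableSpace (𝓢 j)] [∀ j, StandardBorelSpace (𝓢 j)]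
    (X : ∀ t j, Ω → 𝓧 t j) (hX : ∀ t j, Measurable (X t j))
    (W : ∀ t, Ω → 𝓦 t) (hW : ∀ t, Measurable (W t))
    (L : Fin T → Ω → 𝓛) (hL : ∀ t, Measurable (L t))
    (G : Fin T → MeasurableSpace Ω)
    (hG : ∀ t, G t =
      (⨆ s : Fin T, ⨆ _ : s < t, ⨆ j : Fin k,
          MeasurableSpace.comap (X s j) inferInstance) ⊔
      (⨆ s : Fin T, ⨆ _ : s ≤ t, MeasurableSpace.comap (L s) inferInstance))
    (σ : ∀ j, Ω → 𝓢 j) (hσmeas : ∀ j, Measurable (σ j))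
    (hσconst : ∀ j, ∃ v : 𝓢 j, ∀ᵐ ω ∂μ, σ j ω = v)
    (hKall : ∀ t : Fin T,
      ∃ (f : ∀ j : Fin k, 𝓛 × Set.Icc (0 : ℝ) 1 → 𝓧 t j)
        (h : ∀ j : Fin k, 𝓢 j × Set.Icc (0 : ℝ) 1 → Set.Icc (0 : ℝ) 1)
        (e : Fin k → Ω → Set.Icc (0 : ℝ) 1),
        (∀ j, Measurable (f j)) ∧ (∀ j, Measurable (h j)) ∧ (∀ j, Measurable (e j)) ∧
        (∀ j, ∀ᵐ ω ∂μ, X t j ω = f j (L t ω, h j (σ j ω, e j ω))) ∧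
        CondIndepRV μ (G t) (fun ω => fun j => e j ω)
          (fun ω => fun s : {s : Fin T // s ≤ t} => W s.1 ω)) :
    ∀ t : Fin T,
      CondIndepRV μ (G t) (fun ω => fun j => X t j ω)
        (fun ω => fun s : {s : Fin T // s ≤ t} => W s.1 ω) :=
  stmt6_general (mΩ := mΩ) μ T k 𝓧 𝓦 𝓢 X hX W hW L hL G hG σ hσconst hKall
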